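/- arXiv:1106.5204 — 5 statements merged into one kernel-verified Lean document; each statement's English description precedes it below -/
import Mathlib

section
/- Let λ ∈ ℂ be a non-real eigenvalue of M (a non-real root of X⁴−X³−2X²+2X−1) and let u ∈ ℂ⁴ be a nonzero left eigenvector of M for λ (i.e., uᵀM = λuᵀ). Then there exists a constant C such that for every factor b of w, |u·ψ(b)| ≤ C. -/
/-!
Write `σ(p) = ψ(w[0,p))`. Since `φ` maps `w[0,p)` onto `w[0,η(p))`, `σ(η(p)) = M σ(p)`, so
`u·σ(η(p)) = λ (u·σ(p))`. Every position `x > 0` lies within one letter of `η(par x)`, and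
`par x < x`; hence `|u·σ(x)| ≤ |λ| |u·σ(par x)| + ‖u‖₁`, and strong induction bounds `|u·σ(x)|`
by `‖u‖₁ / (1 - |λ|)`, because the non-real roots of `X⁴−X³−2X²+2X−1` lie inside the unit disc.
A factor `w[p,q)` has Parikh vector `σ(q) - σ(p)`.
-/

/-- The morphism φ on letters: φ(0)=03, φ(1)=43, φ(3)=1, φ(4)=01. -/
def phiLetter : ℕ → List ℕ
  | 0 => [0, 3]
  | 1 => [4, 3]
  | 3 => [1]
  | 4 => [0, 1]
  | _ => []

/-- The morphism φ on words, applied letterwise and concatenated. -/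
def phi (x : List ℕ) : List ℕ := x.flatMap phiLetter

/-- The fixed point `w` of φ beginning with 0: `w n` is the `n`-th letter of
`φ^k([0])` for any `k` with `|φ^k([0])| > n` (e.g. `k = n+1`). -/
def w (n : ℕ) : ℕ := (phi^[n + 1] [0]).getD n 0

/-- The factor `w[p, q) = (w p, …, w (q-1))`. -/
def factorW (p q : ℕ) : List ℕ := (List.range' p (q - p)).map w

/-- The Parikh map ψ, sending a word over `{0,1,3,4}` to `(|x|₀,|x|₁,|x|₃,|x|₄) ∈ ℤ⁴`. -/
def psi (x : List ℕ) : Fin 4 → ℤ :=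
  ![(x.count 0 : ℤ), (x.count 1 : ℤ), (x.count 3 : ℤ), (x.count 4 : ℤ)]

/-- The incidence matrix of φ. -/
def M : Matrix (Fin 4) (Fin 4) ℤ :=
  !![1, 0, 0, 1; 0, 0, 1, 1; 1, 1, 0, 0; 0, 1, 0, 0]

/-- `η(p) = |φ(w[0,p))|`. -/
def eta (p : ℕ) : ℕ := (phi ((List.range p).map w)).length

/-- `σ(p) = ψ(w[0,p))`, the Parikh vector of the prefix of `w` of length `p`. -/
def sigmaW (p : ℕ) : Fin 4 → ℤ := psi ((List.range p).map w)

/-- The parent of a position `x`: the unique `t` with `η(t) ≤ x < η(t+1)`. -/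
def par (x : ℕ) : ℕ := Nat.findGreatest (fun t => eta t ≤ x) x

open Matrix

def phiIter (k : ℕ) : List ℕ := phi^[k] [0]

def alphabet : Finset ℕ := {0, 1, 3, 4}

lemma phi_append (x y : List ℕ) : phi (x ++ y) = phi x ++ phi y :=
  List.flatMap_append

lemma List.IsPrefix.phi {x y : List ℕ} (h : x <+: y) : phi x <+: phi y := by
  obtain ⟨t, rfl⟩ := h
  exact ⟨_, (phi_append x t).symm⟩

lemma phi_cons (a : ℕ) (t : List ℕ) : phi (a :: t) = phiLetter a ++ phi t :=
  List.flatMap_cons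

lemma phiIter_succ (k : ℕ) : phiIter (k + 1) = phi (phiIter k) :=
  Function.iterate_succ_apply' phi k [0]

lemma phiIter_prefix_succ (k : ℕ) : phiIter k <+: phiIter (k + 1) := by
  induction k with
  | zero => exact ⟨[3], rfl⟩
  | succ k ih => rw [phiIter_succ, phiIter_succ]; exact ih.phi

lemma phiIter_prefix {k m : ℕ} (h : k ≤ m) : phiIter k <+: phiIter m := by
  induction m, h using Nat.le_induction with
  | base => exact List.prefix_refl _
  | succ m _ ih => exact ih.trans (phiIter_prefix_succ m)

lemma mem_alphabet_of_mem_phi {x : List ℕ} {b : ℕ} (h : b ∈ phi x) : b ∈ alphabet := by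
  obtain ⟨a, -, hb⟩ := List.mem_flatMap.1 h
  unfold phiLetter at hb
  split at hb <;> simp_all [alphabet] <;> omega

lemma mem_alphabet_of_mem_phiIter {k b : ℕ} (h : b ∈ phiIter k) : b ∈ alphabet := by
  cases k with
  | zero => simp_all [phiIter, alphabet]
  | succ k => rw [phiIter_succ] at h; exact mem_alphabet_of_mem_phi h

lemma one_le_length_phiLetter {a : ℕ} (ha : a ∈ alphabet) : 1 ≤ (phiLetter a).length := by
  simp only [alphabet, Finset.mem_insert, Finset.mem_singleton] at ha
  rcases ha with rfl | rfl | rfl | rfl <;> simp [phiLetter]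

lemma length_phiLetter_le_two (a : ℕ) : (phiLetter a).length ≤ 2 := by
  unfold phiLetter
  split <;> simp

lemma length_add_count_zero_le_length_phi {x : List ℕ} (hx : ∀ a ∈ x, a ∈ alphabet) :
    x.length + x.count 0 ≤ (phi x).length := by
  induction x with
  | nil => simp [phi]
  | cons a t ih =>
    have ha := hx a List.mem_cons_self
    have ht := ih fun b hb => hx b (List.mem_cons_of_mem a hb)
    simp only [alphabet, Finset.mem_insert, Finset.mem_singleton] at ha
    rw [phi_cons, List.length_append, List.length_cons, List.count_cons]
    rcases ha with rfl | rfl | rfl | rfl <;> simp [phiLetter] <;> omega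

lemma lt_length_phiIter (k : ℕ) : k < (phiIter k).length := by
  induction k with
  | zero => simp [phiIter]
  | succ k ih =>
    have hzero : 0 < (phiIter k).count 0 :=
      List.count_pos_iff.2 ((phiIter_prefix k.zero_le).subset (List.mem_singleton_self 0))
    have := length_add_count_zero_le_length_phi fun _ ha => mem_alphabet_of_mem_phiIter (k := k) ha
    rw [phiIter_succ]
    omega

lemma map_range_w_eq_of_prefix {x : List ℕ} {k : ℕ} (h : x <+: phiIter k) :
    (List.range x.length).map w = x := by
  refine List.ext_getElem (by simp) fun n _ hn => ?_
  have hlen : n < (phiIter (n + 1)).length := (n.lt_succ_self).trans (lt_length_phiIter _)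
  rw [List.getElem_map, List.getElem_range, h.getElem hn]
  show (phiIter (n + 1)).getD n 0 = _
  rw [List.getD_eq_getElem _ _ hlen, (phiIter_prefix (le_max_left (n + 1) k)).getElem hlen,
    (phiIter_prefix (le_max_right (n + 1) k)).getElem]

lemma w_mem_alphabet (n : ℕ) : w n ∈ alphabet := by
  have hlen : n < (phiIter (n + 1)).length := (n.lt_succ_self).trans (lt_length_phiIter _)
  show (phiIter (n + 1)).getD n 0 ∈ alphabet
  rw [List.getD_eq_getElem _ _ hlen]
  exact mem_alphabet_of_mem_phiIter (List.getElem_mem hlen)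

lemma phi_map_range_w (p : ℕ) : phi ((List.range p).map w) = (List.range (eta p)).map w := by
  have hy : (List.range p).map w = (phiIter p).take p := by
    simpa [min_eq_left (lt_length_phiIter p).le] using
      map_range_w_eq_of_prefix (List.take_prefix p (phiIter p))
  have hφy : phi ((phiIter p).take p) <+: phiIter (p + 1) :=
    phiIter_succ p ▸ (List.take_prefix p _).phi
  rw [eta, hy, map_range_w_eq_of_prefix hφy]

lemma eta_succ (t : ℕ) : eta (t + 1) = eta t + (phiLetter (w t)).length := by
  simp [eta, List.range_succ, phi]

lemma lt_eta {p : ℕ} (hp : 0 < p) : p < eta p := by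
  induction p, hp using Nat.le_induction with
  | base => decide
  | succ p _ ih =>
    have := one_le_length_phiLetter (w_mem_alphabet p)
    rw [eta_succ]
    omega

lemma eta_par_le (x : ℕ) : eta (par x) ≤ x :=
  Nat.findGreatest_spec (P := fun t => eta t ≤ x) (Nat.zero_le x) (Nat.zero_le x)

lemma lt_eta_par_succ (x : ℕ) : x < eta (par x + 1) := by
  by_cases h : par x + 1 ≤ x
  · exact not_le.1 (Nat.findGreatest_is_greatest (P := fun t => eta t ≤ x) (Nat.lt_succ_self _) h)
  · have := lt_eta (show 0 < par x + 1 by omega)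
    omega

lemma par_lt_self {x : ℕ} (hx : 0 < x) : par x < x := by
  refine (Nat.findGreatest_le x).lt_of_ne fun h => ?_
  have := eta_par_le x
  rw [par, h] at this
  exact absurd (lt_eta hx) (not_lt.2 this)

lemma length_factorW_eta_par_le_one (x : ℕ) : (factorW (eta (par x)) x).length ≤ 1 := by
  have := eta_succ (par x)
  have := length_phiLetter_le_two (w (par x))
  have := eta_par_le x
  have := lt_eta_par_succ x
  simp only [factorW, List.length_map, List.length_range']
  omega

lemma psi_append (x y : List ℕ) : psi (x ++ y) = psi x + psi y := by
  funext i
  fin_cases i <;> simp [psi, List.count_append]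

lemma psi_phiLetter (a : ℕ) : psi (phiLetter a) = M *ᵥ psi [a] := by
  match a with
  | 0 | 1 | 2 | 3 | 4 => decide
  | n + 5 =>
    funext i
    fin_cases i <;> simp [phiLetter, psi, M, mulVec, dotProduct, Fin.sum_univ_four]

lemma psi_phi (x : List ℕ) : psi (phi x) = M *ᵥ psi x := by
  induction x with
  | nil => decide
  | cons a t ih =>
    rw [phi_cons, psi_append, ih, ← List.singleton_append, psi_append (x := [a]), mulVec_add,
      psi_phiLetter]

lemma norm_psi_le_length (x : List ℕ) : ‖psi x‖ ≤ x.length := by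
  refine (pi_norm_le_iff_of_nonneg (Nat.cast_nonneg _)).2 fun i => ?_
  fin_cases i <;> simpa [psi, Int.norm_natCast] using List.count_le_length

lemma sigmaW_eta (p : ℕ) : sigmaW (eta p) = M *ᵥ sigmaW p := by
  rw [sigmaW, ← phi_map_range_w, psi_phi, sigmaW]

lemma sigmaW_add_psi_factorW {p q : ℕ} (h : p ≤ q) :
    sigmaW q = sigmaW p + psi (factorW p q) := by
  have hsplit : List.range q = List.range p ++ List.range' p (q - p) := by
    simpa [Nat.add_sub_cancel' h, List.range_eq_range'] using
      (List.range'_append_1 (s := 0) (m := p) (n := q - p)).symm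
  rw [sigmaW, sigmaW, factorW, ← psi_append, ← List.map_append, hsplit]

section intDot

variable {n : Type*} [Fintype n]

def intDot (u : n → ℂ) (s : n → ℤ) : ℂ := ∑ i, u i * (s i : ℂ)

lemma intDot_add (u : n → ℂ) (s t : n → ℤ) : intDot u (s + t) = intDot u s + intDot u t := by
  simp only [intDot, Pi.add_apply, Int.cast_add, mul_add, Finset.sum_add_distrib]

lemma intDot_mulVec {A : Matrix n n ℤ} {lam : ℂ} {u : n → ℂ}
    (heig : vecMul u (A.map (Int.cast : ℤ → ℂ)) = lam • u) (s : n → ℤ) :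
    intDot u (A *ᵥ s) = lam * intDot u s := by
  have hcast : (fun i => ((A *ᵥ s) i : ℂ)) = A.map (Int.cast : ℤ → ℂ) *ᵥ fun i => (s i : ℂ) :=
    funext ((Int.castRingHom ℂ).map_mulVec A s)
  calc intDot u (A *ᵥ s) = u ⬝ᵥ (A.map (Int.cast : ℤ → ℂ) *ᵥ fun i => (s i : ℂ)) := by
        rw [← hcast]; rfl
    _ = lam * intDot u s := by rw [dotProduct_mulVec, heig, smul_dotProduct]; rfl

lemma norm_intDot_le (u : n → ℂ) (s : n → ℤ) : ‖intDot u s‖ ≤ (∑ i, ‖u i‖) * ‖s‖ := by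
  rw [intDot, Finset.sum_mul]
  refine (norm_sum_le _ _).trans (Finset.sum_le_sum fun i _ => ?_)
  rw [norm_mul, Complex.norm_intCast, ← Int.norm_eq_abs]
  exact mul_le_mul_of_nonneg_left (norm_le_pi_norm s i) (norm_nonneg _)

end intDot

/-- `z` and `conj z` are roots of `q = X² - 2 Re z X + |z|²`, so the quartic is `q g` with
`g = X² + (2 Re z - 1) X + d` and `d |z|² = -1`. The quartic is negative at `±1` and `q` is
positive there, so `g(1) + g(-1) = 2 + 2 d < 0`, whence `|z|² = -1 / d < 1`. -/
lemma norm_lt_one_of_root_of_im_ne_zero {z : ℂ}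
    (hz : z ^ 4 - z ^ 3 - 2 * z ^ 2 + 2 * z - 1 = 0) (him : z.im ≠ 0) : ‖z‖ < 1 := by
  set a := z.re
  set s := Complex.normSq z
  set d : ℝ := 2 * a * (2 * a - 1) - s - 2 with hd_def
  have hs : s = a ^ 2 + z.im ^ 2 := by simp only [s, a, Complex.normSq_apply]; ring
  have hq : z ^ 2 - 2 * a * z + s = 0 := by
    apply Complex.ext <;> simp [a, s, Complex.normSq_apply, pow_two] <;> ring
  have hrem : ((2 + 2 * a * d - s * (2 * a - 1) : ℝ) : ℂ) * z + ((-1 - s * d : ℝ) : ℂ) = 0 := by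
    have hdiv : z ^ 4 - z ^ 3 - 2 * z ^ 2 + 2 * z - 1 =
        (z ^ 2 - 2 * a * z + s) * (z ^ 2 + (2 * a - 1) * z + d) +
          ((2 + 2 * a * d - s * (2 * a - 1) : ℝ) : ℂ) * z + ((-1 - s * d : ℝ) : ℂ) := by
      simp only [d]; push_cast; ring
    rw [hz, hq, zero_mul, zero_add] at hdiv
    exact hdiv.symm
  have hα : 2 + 2 * a * d - s * (2 * a - 1) = 0 := by
    simpa [him] using congrArg Complex.im hrem
  have hsd : s * d = -1 := by
    have := congrArg Complex.re hrem
    simp only [hα, Complex.add_re, Complex.mul_re, Complex.ofReal_re, Complex.ofReal_im,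
      Complex.zero_re, zero_mul, zero_sub] at this
    linarith
  have hg_one : (1 + (2 * a - 1) + d) * (1 - 2 * a + s) = -1 := by
    linear_combination -hα + hsd + hd_def
  have hg_neg_one : (1 - (2 * a - 1) + d) * (1 + 2 * a + s) = -3 := by
    linear_combination hα + hsd + hd_def
  have hb : 0 < z.im ^ 2 := by positivity
  have hq_one : 0 < 1 - 2 * a + s := by nlinarith [sq_nonneg (1 - a)]
  have hq_neg_one : 0 < 1 + 2 * a + s := by nlinarith [sq_nonneg (1 + a)]
  have hg_one_neg := neg_of_mul_neg_left (hg_one.trans_lt (by norm_num)) hq_one.le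
  have hg_neg_one_neg := neg_of_mul_neg_left (hg_neg_one.trans_lt (by norm_num)) hq_neg_one.le
  have hs_lt : s < 1 := by nlinarith
  rw [← sq_lt_one_iff₀ (norm_nonneg _), ← Complex.normSq_eq_norm_sq]
  exact hs_lt

lemma le_of_le_mul_parent_add {a : ℕ → ℝ} {f : ℕ → ℕ} {r D C : ℝ} (hr : 0 ≤ r)
    (hC : r * C + D ≤ C) (h0 : a 0 ≤ C) (hf : ∀ x, 0 < x → f x < x)
    (ha : ∀ x, 0 < x → a x ≤ r * a (f x) + D) (x : ℕ) : a x ≤ C := by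
  induction x using Nat.strong_induction_on with
  | _ x ih =>
    rcases Nat.eq_zero_or_pos x with rfl | hx
    · exact h0
    · calc a x ≤ r * a (f x) + D := ha x hx
        _ ≤ r * C + D := by gcongr; exact ih _ (hf x hx)
        _ ≤ C := hC

lemma norm_intDot_sigmaW_le_mul_par_add {lam : ℂ} {u : Fin 4 → ℂ}
    (heig : vecMul u (M.map (Int.cast : ℤ → ℂ)) = lam • u) (x : ℕ) :
    ‖intDot u (sigmaW x)‖ ≤ ‖lam‖ * ‖intDot u (sigmaW (par x))‖ + ∑ i, ‖u i‖ := by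
  have hsplit := sigmaW_add_psi_factorW (eta_par_le x)
  have hgap : ‖psi (factorW (eta (par x)) x)‖ ≤ 1 :=
    (norm_psi_le_length _).trans (by exact_mod_cast length_factorW_eta_par_le_one x)
  calc ‖intDot u (sigmaW x)‖
      ≤ ‖intDot u (sigmaW (eta (par x)))‖ + ‖intDot u (psi (factorW (eta (par x)) x))‖ := by
        rw [hsplit, intDot_add]; exact norm_add_le _ _
    _ ≤ ‖lam‖ * ‖intDot u (sigmaW (par x))‖ + (∑ i, ‖u i‖) * 1 := by
        rw [sigmaW_eta, intDot_mulVec heig, norm_mul]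
        gcongr
        exact (norm_intDot_le _ _).trans (by gcongr)
    _ = _ := by rw [mul_one]

lemma norm_intDot_sigmaW_le {lam : ℂ} {u : Fin 4 → ℂ}
    (heig : vecMul u (M.map (Int.cast : ℤ → ℂ)) = lam • u) (hlam : ‖lam‖ < 1) (x : ℕ) :
    ‖intDot u (sigmaW x)‖ ≤ (∑ i, ‖u i‖) / (1 - ‖lam‖) := by
  have hgap : 0 < 1 - ‖lam‖ := sub_pos.2 hlam
  refine le_of_le_mul_parent_add (norm_nonneg lam) ?_ ?_ (fun _ => par_lt_self)
    (fun x _ => norm_intDot_sigmaW_le_mul_par_add heig x) x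
  · apply le_of_eq
    field_simp
    ring
  · have : intDot u (sigmaW 0) = 0 := by simp [intDot, sigmaW, psi, Fin.sum_univ_four]
    rw [this, norm_zero]
    exact div_nonneg (Finset.sum_nonneg fun i _ => norm_nonneg _) hgap.le

theorem bounded_eigencoordinate_of_nonreal_general (lam : ℂ) (u : Fin 4 → ℂ)
    (hroot : lam ^ 4 - lam ^ 3 - 2 * lam ^ 2 + 2 * lam - 1 = 0) (him : lam.im ≠ 0)
    (heig : Matrix.vecMul u (M.map (Int.cast : ℤ → ℂ)) = lam • u) :
    ∃ C : ℝ, ∀ p q : ℕ, p ≤ q →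
      ‖∑ i, u i * (psi (factorW p q) i : ℂ)‖ ≤ C := by
  have hbound := norm_intDot_sigmaW_le heig (norm_lt_one_of_root_of_im_ne_zero hroot him)
  refine ⟨2 * ((∑ i, ‖u i‖) / (1 - ‖lam‖)), fun p q hpq => ?_⟩
  have hdiff : intDot u (psi (factorW p q)) = intDot u (sigmaW q) - intDot u (sigmaW p) := by
    rw [sigmaW_add_psi_factorW hpq, intDot_add, add_sub_cancel_left]
  calc ‖intDot u (psi (factorW p q))‖ ≤ ‖intDot u (sigmaW q)‖ + ‖intDot u (sigmaW p)‖ := by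
        rw [hdiff]; exact norm_sub_le _ _
    _ ≤ _ := by linarith [hbound p, hbound q]

/-- If `λ` is a non-real eigenvalue of `M` (a non-real root of
`X⁴−X³−2X²+2X−1`) and `u` is a nonzero left eigenvector for `λ`, then `|u·ψ(b)|` is
uniformly bounded over all factors `b` of `w`. -/
theorem bounded_eigencoordinate_of_nonreal (lam : ℂ) (u : Fin 4 → ℂ)
    (hroot : lam ^ 4 - lam ^ 3 - 2 * lam ^ 2 + 2 * lam - 1 = 0) (him : lam.im ≠ 0)
    (hu : u ≠ 0) (heig : Matrix.vecMul u (M.map (Int.cast : ℤ → ℂ)) = lam • u) :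
    ∃ C : ℝ, ∀ p q : ℕ, p ≤ q →
      ‖∑ i, u i * (psi (factorW p q) i : ℂ)‖ ≤ C :=
  bounded_eigencoordinate_of_nonreal_general lam u hroot him heig
end

section
/- Let λ ∈ ℂ be a non-real eigenvalue of M and let u ∈ ℂ⁴ be a nonzero left eigenvector of M for λ (uᵀM = λuᵀ). Then there exist real constants α > 0 and β > 0 such that for all integers m, n, the vector v = m·(1,−2,2,−1) + n·(1,−1,−1,1) ∈ 𝔏 satisfies |u·v| ≥ α|m| and |u·v| ≥ β|n|. -/
open ComplexConjugate

namespace Complex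

theorem abs_mul_abs_im_conj_mul_le (A B : ℂ) (m n : ℝ) :
    |m| * |(conj B * A).im| ≤ ‖B‖ * ‖(m : ℂ) * A + n * B‖ := by
  have him : (conj B * ((m : ℂ) * A + n * B)).im = m * (conj B * A).im := by
    rw [mul_add, mul_left_comm, mul_left_comm _ (n : ℂ), mul_comm _ B, mul_conj, add_im,
      im_ofReal_mul, ← ofReal_mul, ofReal_im, add_zero]
  calc |m| * |(conj B * A).im| = |(conj B * ((m : ℂ) * A + n * B)).im| := by
        rw [him, abs_mul]
    _ ≤ ‖conj B * ((m : ℂ) * A + n * B)‖ := abs_im_le_norm _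
    _ = ‖B‖ * ‖(m : ℂ) * A + n * B‖ := by rw [norm_mul, norm_conj]

theorem exists_pos_mul_abs_le_norm_add (A B : ℂ) (h : (conj B * A).im ≠ 0) :
    ∃ α : ℝ, 0 < α ∧ ∀ m n : ℝ, α * |m| ≤ ‖(m : ℂ) * A + n * B‖ := by
  have hB : 0 < ‖B‖ := norm_pos_iff.2 (by rintro rfl; simp at h)
  refine ⟨|(conj B * A).im| / ‖B‖, div_pos (abs_pos.2 h) hB, fun m n => ?_⟩
  rw [div_mul_eq_mul_div, div_le_iff₀ hB, mul_comm _ |m|, mul_comm _ ‖B‖]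
  exact abs_mul_abs_im_conj_mul_le A B m n

end Complex

open Complex

theorem add_mul_one_add_sq_eq_of_roots {K : Type*} [Field K] {z w : K}
    (hz : z ^ 4 - z ^ 3 - 2 * z ^ 2 + 2 * z - 1 = 0)
    (hw : w ^ 4 - w ^ 3 - 2 * w ^ 2 + 2 * w - 1 = 0)
    (hzw : z ≠ w) : (z + w) * (1 + (z * w) ^ 2) = (z * w) ^ 2 + 2 * (z * w) :=
  mul_left_cancel₀ (sub_ne_zero.2 hzw) (by linear_combination w ^ 2 * hz - z ^ 2 * hw)

/-- The Bezoutian `(a(w) b(z) - a(z) b(w)) / (w - z)` of the cubics `a = -X³ - X² + 5X - 2` and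
`b = X³ - 2X² - X + 3`, written in `s = z + w` and `t = z w`. -/
def bezoutian {R : Type*} [CommRing R] (s t : R) : R :=
  3 * t ^ 2 - 4 * t * s - s ^ 2 + 12 * t - 7 * s + 13

theorem mul_sub_mul_eq_sub_mul_bezoutian {R : Type*} [CommRing R] (z w : R) :
    (-w ^ 3 - w ^ 2 + 5 * w - 2) * (z ^ 3 - 2 * z ^ 2 - z + 3) -
        (-z ^ 3 - z ^ 2 + 5 * z - 2) * (w ^ 3 - 2 * w ^ 2 - w + 3) =
      (w - z) * bezoutian (z + w) (z * w) := by
  rw [bezoutian]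
  ring

theorem bezoutian_pos {s t : ℝ} (h : s * (1 + t ^ 2) = t ^ 2 + 2 * t) (ht : 0 ≤ t) :
    0 < bezoutian s t := by
  have hP : (1 + t ^ 2) ^ 2 * bezoutian s t =
      3 * t ^ 6 + 8 * t ^ 5 + 3 * t ^ 4 + 2 * t ^ 3 + 9 * t ^ 2 + (t - 1) ^ 2 + 12 := by
    rw [bezoutian]
    linear_combination (-(4 * t + 7) * (1 + t ^ 2) - s * (1 + t ^ 2) - (t ^ 2 + 2 * t)) * h
  have hprod : 0 < (1 + t ^ 2) ^ 2 * bezoutian s t := by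
    rw [hP]
    positivity
  exact pos_of_mul_pos_right hprod (by positivity)

theorem bezoutian_add_conj_mul_conj_ne_zero {lam : ℂ}
    (hroot : lam ^ 4 - lam ^ 3 - 2 * lam ^ 2 + 2 * lam - 1 = 0) (him : lam.im ≠ 0) :
    bezoutian (lam + conj lam) (lam * conj lam) ≠ 0 := by
  have hroot' : conj lam ^ 4 - conj lam ^ 3 - 2 * conj lam ^ 2 + 2 * conj lam - 1 = 0 := by
    simpa [map_ofNat] using congrArg conj hroot
  have hne : lam ≠ conj lam := fun h => him (conj_eq_iff_im.1 h.symm)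
  have hrel := add_mul_one_add_sq_eq_of_roots hroot hroot' hne
  rw [add_conj, mul_conj] at hrel ⊢
  have hpos := ofReal_ne_zero.2 (bezoutian_pos (by exact_mod_cast hrel) (normSq_nonneg lam)).ne'
  simpa [bezoutian] using hpos

theorem eq_smul_of_vecMul_M_eq_smul {R : Type*} [CommRing R] {lam : R} {u : Fin 4 → R}
    (heig : Matrix.vecMul u (M.map (Int.cast : ℤ → R)) = lam • u) :
    u = u 0 • ![1, lam ^ 2 - lam, lam - 1, lam ^ 3 - lam ^ 2 - lam + 1] := by
  have h0 := congrFun heig 0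
  have h1 := congrFun heig 1
  have h2 := congrFun heig 2
  simp only [Matrix.vecMul, dotProduct, M, Fin.sum_univ_four, Matrix.map_apply, Matrix.of_apply,
    Matrix.cons_val', Matrix.cons_val, Matrix.cons_val_fin_one, Pi.smul_apply, smul_eq_mul]
    at h0 h1 h2
  ext i
  fin_cases i <;> simp only [Fin.zero_eta, Fin.mk_one, Fin.reduceFinMk, Pi.smul_apply, smul_eq_mul,
    Matrix.cons_val, Matrix.cons_val_zero, Matrix.cons_val_one]
  · ring
  · linear_combination h2 + lam * h0
  · linear_combination h0
  · linear_combination h1 + lam * h2 + (lam ^ 2 - 1) * h0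

theorem sum_smul_mul_lattice_vector {R : Type*} [CommRing R] (c lam : R) (m n : ℤ) :
    ∑ i, (c • ![1, lam ^ 2 - lam, lam - 1, lam ^ 3 - lam ^ 2 - lam + 1]) i *
        ((m • ![(1 : ℤ), -2, 2, -1] + n • ![(1 : ℤ), -1, -1, 1]) i : R) =
      m * (c * (-lam ^ 3 - lam ^ 2 + 5 * lam - 2)) +
        n * (c * (lam ^ 3 - 2 * lam ^ 2 - lam + 3)) := by
  simp only [Fin.sum_univ_four, Pi.add_apply, Pi.smul_apply, smul_eq_mul, Matrix.cons_val,
    Matrix.cons_val_zero, Matrix.cons_val_one]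
  push_cast
  ring

theorem im_conj_mul_eigencoordinates_ne_zero {c lam : ℂ} (hc : c ≠ 0)
    (hroot : lam ^ 4 - lam ^ 3 - 2 * lam ^ 2 + 2 * lam - 1 = 0) (him : lam.im ≠ 0) :
    (conj (c * (lam ^ 3 - 2 * lam ^ 2 - lam + 3)) *
      (c * (-lam ^ 3 - lam ^ 2 + 5 * lam - 2))).im ≠ 0 := by
  rw [Ne, ← conj_eq_iff_im]
  intro h
  simp only [map_mul, map_sub, map_add, map_neg, map_pow, map_ofNat, conj_conj] at h
  have hzero : c * conj c *
      ((-conj lam ^ 3 - conj lam ^ 2 + 5 * conj lam - 2) * (lam ^ 3 - 2 * lam ^ 2 - lam + 3) -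
        (-lam ^ 3 - lam ^ 2 + 5 * lam - 2) * (conj lam ^ 3 - 2 * conj lam ^ 2 - conj lam + 3)) =
      0 := by
    linear_combination h
  rw [mul_sub_mul_eq_sub_mul_bezoutian] at hzero
  have hne : conj lam - lam ≠ 0 := sub_ne_zero.2 fun h' => him (conj_eq_iff_im.1 h')
  exact mul_ne_zero (mul_ne_zero hc ((map_ne_zero conj).2 hc))
    (mul_ne_zero hne (bezoutian_add_conj_mul_conj_ne_zero hroot him)) hzero

/-- If `λ` is a non-real eigenvalue of `M` and `u` a nonzero left
eigenvector for `λ`, then there are constants `α, β > 0` with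
`|u·v| ≥ α|m|` and `|u·v| ≥ β|n|` for every `v = m·(1,−2,2,−1) + n·(1,−1,−1,1) ∈ 𝔏`. -/
theorem lattice_eigencoordinate_lower_bound (lam : ℂ) (u : Fin 4 → ℂ)
    (hroot : lam ^ 4 - lam ^ 3 - 2 * lam ^ 2 + 2 * lam - 1 = 0) (him : lam.im ≠ 0)
    (hu : u ≠ 0) (heig : Matrix.vecMul u (M.map (Int.cast : ℤ → ℂ)) = lam • u) :
    ∃ α β : ℝ, 0 < α ∧ 0 < β ∧ ∀ m n : ℤ,
      α * |(m : ℝ)| ≤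
          ‖(∑ i, u i * ((m • ![(1 : ℤ), -2, 2, -1] + n • ![(1 : ℤ), -1, -1, 1]) i : ℂ))‖ ∧
      β * |(n : ℝ)| ≤
          ‖(∑ i, u i * ((m • ![(1 : ℤ), -2, 2, -1] + n • ![(1 : ℤ), -1, -1, 1]) i : ℂ))‖ := by
  have hu_eq := eq_smul_of_vecMul_M_eq_smul heig
  have hu0 : u 0 ≠ 0 := fun h => hu (by rw [hu_eq, h, zero_smul])
  set A := u 0 * (-lam ^ 3 - lam ^ 2 + 5 * lam - 2)
  set B := u 0 * (lam ^ 3 - 2 * lam ^ 2 - lam + 3)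
  have hBA : (conj B * A).im ≠ 0 := im_conj_mul_eigencoordinates_ne_zero hu0 hroot him
  have hAB : (conj A * B).im ≠ 0 := by
    rwa [← conj_conj (conj A * B), conj_im, map_mul, conj_conj, mul_comm, neg_ne_zero]
  obtain ⟨α, hα, hmA⟩ := exists_pos_mul_abs_le_norm_add A B hBA
  obtain ⟨β, hβ, hnB⟩ := exists_pos_mul_abs_le_norm_add B A hAB
  refine ⟨α, β, hα, hβ, fun m n => ?_⟩
  rw [hu_eq, sum_smul_mul_lattice_vector]
  refine ⟨by simpa only [ofReal_intCast] using hmA m n, ?_⟩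
  simpa only [ofReal_intCast, add_comm (_ * B)] using hnB n m
end

section
/- The polynomial p(X) = X⁴ − X³ − 2X² + 2X − 1 over ℂ has exactly two real roots: one real root λ₁ with 1.6902 < λ₁ < 1.6903 and one real root λ₂ with −1.5051 < λ₂ < −1.5050; moreover, every root z ∈ ℂ of p with z ∉ ℝ satisfies |z| < 1. -/
/-!
Two sign changes locate real roots `a ∈ (1.6902, 1.6903)` and `b ∈ (-1.5051, -1.5050)`.
Dividing them out gives `a b · p = (X - a)(X - b)(a b X² + a b (a + b - 1) X - 1)`. The
quadratic factor has real coefficients and negative discriminant, so it has no real root, and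
its two conjugate complex roots have product `-1 / (a b) ≈ 0.393 < 1`.
-/

open ComplexConjugate

def quartic {R : Type*} [CommRing R] (x : R) : R := x ^ 4 - x ^ 3 - 2 * x ^ 2 + 2 * x - 1

@[simp, norm_cast]
lemma Complex.quartic_ofReal (x : ℝ) : quartic (x : ℂ) = quartic x := by
  simp only [quartic]; push_cast; rfl

section Factorization

variable {R : Type*} [CommRing R] [IsDomain R] {a b : R}

lemma quartic_mul_eq_of_roots (hab : a ≠ b) (ha : quartic a = 0) (hb : quartic b = 0) (x : R) :
    a * b * quartic x = (x - a) * (x - b) * (a * b * x ^ 2 + a * b * (a + b - 1) * x - 1) := by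
  refine sub_eq_zero.mp <| (mul_right_injective₀ (sub_ne_zero.mpr hab)).eq_iff.mp ?_
  simp only [quartic] at ha hb ⊢
  linear_combination (x ^ 2 * b - x * b ^ 2) * ha + (x * a ^ 2 - x ^ 2 * a) * hb

lemma ne_zero_of_quartic_eq_zero (ha : quartic a = 0) : a ≠ 0 := by
  rintro rfl
  norm_num [quartic] at ha

lemma quartic_eq_zero_iff_of_roots (hab : a ≠ b) (ha : quartic a = 0) (hb : quartic b = 0)
    (x : R) : quartic x = 0 ↔
      x = a ∨ x = b ∨ a * b * x ^ 2 + a * b * (a + b - 1) * x - 1 = 0 := by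
  have hab₀ : a * b ≠ 0 :=
    mul_ne_zero (ne_zero_of_quartic_eq_zero ha) (ne_zero_of_quartic_eq_zero hb)
  rw [← mul_eq_zero_iff_left hab₀, quartic_mul_eq_of_roots hab ha hb, mul_eq_zero, mul_eq_zero,
    sub_eq_zero, sub_eq_zero, or_assoc]

end Factorization

lemma quadratic_ne_zero_of_discrim_neg {K : Type*} [CommRing K] [LinearOrder K]
    [IsStrictOrderedRing K] {a b c : K} (h : discrim a b c < 0) (x : K) :
    a * (x * x) + b * x + c ≠ 0 :=
  quadratic_ne_zero_of_discrim_ne_sq (fun s hs => (hs ▸ h).not_ge (sq_nonneg s)) x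

lemma Complex.mul_normSq_eq_of_quadratic_eq_zero {t u v : ℝ} {z : ℂ} (hz : z.im ≠ 0)
    (h : t * z ^ 2 + u * z + v = 0) : t * normSq z = v := by
  have hconj : t * conj z ^ 2 + u * conj z + v = 0 := by simpa using congrArg conj h
  have hsub : z - conj z ≠ 0 := sub_ne_zero.mpr fun h' => hz (conj_eq_iff_im.mp h'.symm)
  have hdiff : (z - conj z) * (t * (z + conj z) + u) = 0 := by linear_combination h - hconj
  have hsum : t * (z + conj z) + u = 0 := (mul_eq_zero.mp hdiff).resolve_left hsub
  have : (t : ℂ) * (z * conj z) = v := by linear_combination z * hsum - h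
  exact_mod_cast mul_conj z ▸ this

lemma exists_root_quartic_near_pos : ∃ a : ℝ, a ∈ Set.Ioo 1.6902 1.6903 ∧ quartic a = 0 :=
  intermediate_value_Ioo (by norm_num) (by unfold quartic; fun_prop)
    (by constructor <;> norm_num [quartic])

lemma exists_root_quartic_near_neg : ∃ b : ℝ, b ∈ Set.Ioo (-1.5051) (-1.5050) ∧ quartic b = 0 :=
  intermediate_value_Ioo' (by norm_num) (by unfold quartic; fun_prop)
    (by constructor <;> norm_num [quartic])

lemma root_product_lt_neg_one_and_discrim_neg {a b : ℝ} (ha : a ∈ Set.Ioo 1.6902 1.6903)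
    (hb : b ∈ Set.Ioo (-1.5051) (-1.5050)) :
    a * b < -1 ∧ discrim (a * b) (a * b * (a + b - 1)) (-1) < 0 := by
  obtain ⟨ha₁, ha₂⟩ := ha
  obtain ⟨hb₁, hb₂⟩ := hb
  have hprod : -4 < a * b ∧ a * b < -1 := by constructor <;> nlinarith
  have hsum : (a + b - 1) ^ 2 < 1 := by nlinarith
  have hpos : 0 < a * b * (a + b - 1) ^ 2 + 4 := by nlinarith [sq_nonneg (a + b - 1)]
  refine ⟨hprod.2, ?_⟩
  rw [discrim]
  linear_combination mul_neg_of_neg_of_pos (hprod.2.trans (by norm_num)) hpos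

/-- The polynomial `X⁴ − X³ − 2X² + 2X − 1` has exactly two real roots,
`λ₁ ∈ (1.6902, 1.6903)` and `λ₂ ∈ (−1.5051, −1.5050)`, and every non-real complex root
has absolute value less than 1. -/
theorem char_poly_roots :
    ∃ lam₁ lam₂ : ℝ,
      (1.6902 < lam₁ ∧ lam₁ < 1.6903) ∧
      (-1.5051 < lam₂ ∧ lam₂ < -1.5050) ∧
      (∀ x : ℝ, x ^ 4 - x ^ 3 - 2 * x ^ 2 + 2 * x - 1 = 0 ↔ (x = lam₁ ∨ x = lam₂)) ∧
      (∀ z : ℂ, z ^ 4 - z ^ 3 - 2 * z ^ 2 + 2 * z - 1 = 0 → z.im ≠ 0 → ‖z‖ < 1) := by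
  obtain ⟨a, ha_mem, ha⟩ := exists_root_quartic_near_pos
  obtain ⟨b, hb_mem, hb⟩ := exists_root_quartic_near_neg
  have hab : a ≠ b := ne_of_gt (by linarith [ha_mem.1, hb_mem.2])
  obtain ⟨hprod, hdiscr⟩ := root_product_lt_neg_one_and_discrim_neg ha_mem hb_mem
  refine ⟨a, b, ha_mem, hb_mem, fun x => ?_, fun z hz him => ?_⟩
  · have hquad : a * b * x ^ 2 + a * b * (a + b - 1) * x - 1 ≠ 0 := by
      simpa [sq, sub_eq_add_neg] using quadratic_ne_zero_of_discrim_neg hdiscr x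
    exact (quartic_eq_zero_iff_of_roots hab ha hb x).trans (by simp only [hquad, or_false])
  · have hza : z ≠ a := fun h => him (by simp [h])
    have hzb : z ≠ b := fun h => him (by simp [h])
    have hquad := ((quartic_eq_zero_iff_of_roots (R := ℂ) (by exact_mod_cast hab)
      (by exact_mod_cast ha) (by exact_mod_cast hb) z).mp hz).resolve_left hza |>.resolve_left hzb
    have hnorm := Complex.mul_normSq_eq_of_quadratic_eq_zero (t := a * b)
      (u := a * b * (a + b - 1)) (v := -1) him (by push_cast; linear_combination hquad)
    rw [← sq_lt_one_iff₀ (norm_nonneg z), Complex.sq_norm]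
    nlinarith [Complex.normSq_nonneg z]
end

section
/- Let F : A ⥤q B be a child-bijective prefunctor of quivers and fix a vertex a of A. Then for every n ∈ ℕ, the map induced by F from {paths of length n in A starting at a} (pairs of an endpoint a' and a path a ⟶ a' of length n) to {paths of length n in B starting at F a} is a bijection. In particular, F induces a bijection between all paths in A starting at a and all paths in B starting at F a. -/
/-- A prefunctor is *child-bijective* if for every vertex `a`, the induced map on
out-arrows `Σ a', (a ⟶ a') → Σ b', (F a ⟶ b')` is a bijection. -/
def Prefunctor.ChildBijective {A B : Type*} [Quiver A] [Quiver B] (F : A ⥤q B) : Prop :=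
  ∀ a : A, Function.Bijective
    (fun e : Σ a', a ⟶ a' => (⟨F.obj e.1, F.map e.2⟩ : Σ b', F.obj a ⟶ b'))

/-- `Prefunctor.mapPath` preserves path length. -/
lemma Prefunctor.mapPath_length {A B : Type*} [Quiver A] [Quiver B] (F : A ⥤q B)
    {a b : A} (p : Quiver.Path a b) : (F.mapPath p).length = p.length := by
  induction p with
  | nil => rfl
  | cons p e ih => simp [Prefunctor.mapPath, Quiver.Path.length, ih]

/-!
Child-bijectivity says precisely that every star map `F.star a` is bijective, so paths out of
`F a` lift uniquely, edge by edge, to paths out of `a`. Since `F.mapPath` preserves length, this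
bijection of path stars restricts to paths of each fixed length.
-/

open Function

theorem Function.Bijective.subtype_map {α β : Type*} {f : α → β} (hf : Bijective f)
    {p : α → Prop} {q : β → Prop} (h : ∀ a, p a ↔ q (f a)) :
    Bijective (Subtype.map f fun a => (h a).1) :=
  (Equiv.subtypeEquiv (Equiv.ofBijective f hf) h).bijective

theorem Prefunctor.ChildBijective.star_bijective {A B : Type*} [Quiver A] [Quiver B]
    {F : A ⥤q B} (hF : F.ChildBijective) (a : A) : Bijective (F.star a) :=
  hF a

/-- A child-bijective prefunctor induces, for each vertex `a` and each
`n`, a bijection between paths of length `n` starting at `a` and paths of length `n`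
starting at `F a`; in particular, a bijection between all paths starting at `a` and all
paths starting at `F a`. -/
theorem childBijective_paths_bijective {A B : Type*} [Quiver A] [Quiver B] (F : A ⥤q B)
    (hF : F.ChildBijective) (a : A) :
    (∀ n : ℕ, Function.Bijective
      (fun x : {x : Σ a', Quiver.Path a a' // x.2.length = n} =>
        (⟨⟨F.obj x.1.1, F.mapPath x.1.2⟩, by rw [Prefunctor.mapPath_length]; exact x.2⟩ :
          {y : Σ b', Quiver.Path (F.obj a) b' // y.2.length = n}))) ∧
    Function.Bijective
      (fun x : Σ a', Quiver.Path a a' =>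
        (⟨F.obj x.1, F.mapPath x.2⟩ : Σ b', Quiver.Path (F.obj a) b')) := by
  have hpaths : Bijective (F.pathStar a) := F.pathStar_bijective hF.star_bijective a
  refine ⟨fun n => ?_, hpaths⟩
  exact hpaths.subtype_map fun x => by rw [← F.mapPath_length x.2]; rfl
end

section
/- For every position p of w, there exist N ∈ ℕ and words a₀, a₁, …, a_{N−1}, each of which belongs to {ε, [0], [4]} (the empty word, the single letter 0, or the single letter 4), such that σ(p) = ∑_{i=0}^{N−1} M^i · ψ(a_i). -/
/-!
A prefix of `φᵏ⁺¹([0]) = φ(φᵏ([0]))` is the image of a prefix `u` of `φᵏ([0])` followed by a proper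
prefix `s` of the image of a letter, so `s ∈ {ε, [0], [4]}`. As `M` is the incidence matrix of φ,
`ψ ∘ φ = M ψ`, so ψ of that prefix is `M ψ(u) + ψ(s)`, and induction on `k` gives the sum with
`N = k + 1`. The prefix of `w` of length `p` is a prefix of `φᵖ([0])`.
-/

open Matrix

/-- A prefix of `f a₀ ++ f a₁ ++ ⋯` is a run of whole blocks followed by a proper prefix of the
next block (or by `[]`). -/
theorem List.exists_take_flatMap_eq {α β : Type*} {f : α → List β} {S : Set (List β)}
    (hnil : [] ∈ S) (hS : ∀ a, ∀ r < (f a).length, (f a).take r ∈ S) (x : List α) (n : ℕ) :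
    ∃ t, ∃ s ∈ S, (x.flatMap f).take n = (x.take t).flatMap f ++ s := by
  induction x generalizing n with
  | nil => exact ⟨0, [], hnil, by simp⟩
  | cons a x ih =>
    by_cases hn : n < (f a).length
    · refine ⟨0, (f a).take n, hS a n hn, ?_⟩
      simp [List.take_append, Nat.sub_eq_zero_of_le hn.le]
    · obtain ⟨t, s, hs, heq⟩ := ih (n - (f a).length)
      refine ⟨t + 1, s, hs, ?_⟩
      simp [List.take_append, List.take_of_length_le (not_lt.mp hn), heq]

lemma phiLetter_ne_nil_of_mem_phi {c : ℕ} {x : List ℕ} (hc : c ∈ phi x) : phiLetter c ≠ [] := by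
  obtain ⟨d, -, hcd⟩ := List.mem_flatMap.mp hc
  match d with
  | 0 | 1 | 3 | 4 =>
    simp only [phiLetter, List.mem_cons, List.not_mem_nil, or_false] at hcd
    rcases hcd with rfl | rfl <;> simp [phiLetter]
  | 2 | _ + 5 => simp [phiLetter] at hcd

lemma take_phiLetter_mem (c : ℕ) :
    ∀ r < (phiLetter c).length, (phiLetter c).take r ∈ ({[], [0], [4]} : Set (List ℕ)) := by
  intro r hr
  match c with
  | 0 | 1 | 3 | 4 =>
    simp only [phiLetter, List.length_cons, List.length_nil] at hr
    interval_cases r <;> simp [phiLetter]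
  | 2 | _ + 5 => simp [phiLetter] at hr

lemma length_lt_length_phi {x : List ℕ} (hx : ∀ c ∈ x, phiLetter c ≠ []) (h0 : 0 ∈ x) :
    x.length < (phi x).length := by
  have hlen : x.length = (x.map fun _ => 1).sum := by simp
  rw [hlen, phi, List.length_flatMap]
  exact List.sum_lt_sum _ _ (fun c hc => List.length_pos_iff.mpr (hx c hc))
    ⟨0, h0, by simp [phiLetter]⟩

lemma iterate_phi_succ (k : ℕ) : phi^[k + 1] [0] = phi (phi^[k] [0]) :=
  Function.iterate_succ_apply' phi k [0]

lemma iterate_phi_prefix_succ (k : ℕ) : phi^[k] [0] <+: phi^[k + 1] [0] := by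
  induction k with
  | zero => exact ⟨[3], by simp [phi, phiLetter]⟩
  | succ k ih =>
    rw [iterate_phi_succ, iterate_phi_succ]
    exact ih.flatMap phiLetter

lemma iterate_phi_prefix {k m : ℕ} (h : k ≤ m) : phi^[k] [0] <+: phi^[m] [0] := by
  induction m, h using Nat.le_induction with
  | base => exact List.prefix_refl _
  | succ m _ ih => exact ih.trans (iterate_phi_prefix_succ m)

lemma lt_length_iterate_phi (k : ℕ) : k < (phi^[k] [0]).length := by
  induction k with
  | zero => simp
  | succ k ih =>
    have hzero : 0 ∈ phi^[k] [0] :=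
      (iterate_phi_prefix k.zero_le).subset (List.mem_singleton_self 0)
    have hletters : ∀ c ∈ phi^[k] [0], phiLetter c ≠ [] := by
      cases k with
      | zero => simp [phiLetter]
      | succ k => rw [iterate_phi_succ]; exact fun c => phiLetter_ne_nil_of_mem_phi
    have := length_lt_length_phi hletters hzero
    rw [iterate_phi_succ]
    omega

lemma w_eq_getElem_iterate {k n : ℕ} (hn : n < (phi^[k] [0]).length) : w n = (phi^[k] [0])[n] := by
  have hn' : n < (phi^[n + 1] [0]).length := (lt_length_iterate_phi (n + 1)).trans' n.lt_succ_self
  rw [w, List.getD_eq_getElem _ _ hn', (iterate_phi_prefix (le_max_right k (n + 1))).getElem hn',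
    (iterate_phi_prefix (le_max_left k (n + 1))).getElem hn]

lemma map_w_range_eq_take {k p : ℕ} (hp : p ≤ (phi^[k] [0]).length) :
    (List.range p).map w = (phi^[k] [0]).take p := by
  apply List.ext_getElem (by simpa using hp)
  intro i hi _
  simp only [List.length_map, List.length_range] at hi
  rw [List.getElem_map, List.getElem_range, List.getElem_take,
    w_eq_getElem_iterate (k := k) (by omega)]

lemma exists_psi_take_iterate_phi_eq_sum (k p : ℕ) :
    ∃ a : ℕ → List ℕ, (∀ i < k + 1, a i ∈ ({[], [0], [4]} : Set (List ℕ))) ∧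
      psi ((phi^[k] [0]).take p) = ∑ i ∈ Finset.range (k + 1), (M ^ i) *ᵥ psi (a i) := by
  induction k generalizing p with
  | zero =>
    refine ⟨fun _ => [0].take p, fun _ _ => ?_, by simp⟩
    rcases p with _ | _ <;> simp
  | succ k ih =>
    obtain ⟨t, s, hs, hsplit⟩ :=
      List.exists_take_flatMap_eq (by simp) take_phiLetter_mem (phi^[k] [0]) p
    obtain ⟨a, ha, hsum⟩ := ih t
    refine ⟨fun | 0 => s | i + 1 => a i, fun | 0, _ => hs | i + 1, hi => ha i (by omega), ?_⟩
    rw [iterate_phi_succ, phi, hsplit, psi_append, ← phi, psi_phi, hsum, mulVec_sum,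
      Finset.sum_range_succ' _ (k + 1)]
    simp [mulVec_mulVec, pow_succ']

/-- For every position `p`, there are words `a₀, …, a_{N−1}`, each in
`{ε, [0], [4]}`, with `σ(p) = ∑_{i<N} M^i · ψ(aᵢ)`. -/
theorem sigma_as_sum_of_prefix_vectors (p : ℕ) :
    ∃ (N : ℕ) (a : ℕ → List ℕ),
      (∀ i < N, a i ∈ ({[], [0], [4]} : Set (List ℕ))) ∧
      sigmaW p = ∑ i ∈ Finset.range N, (M ^ i).mulVec (psi (a i)) := by
  obtain ⟨a, ha, hsum⟩ := exists_psi_take_iterate_phi_eq_sum p p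
  refine ⟨p + 1, a, ha, ?_⟩
  rw [sigmaW, map_w_range_eq_take (lt_length_iterate_phi p).le, hsum]
end
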